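/- Let G be a group with finite symmetric generating set X and suppose every k-local geodesic over X is geodesic. Then repeated application of the finite set of rewrite rules {u → v : l(v) < l(u) ≤ k, u =_G v, v geodesic} reduces every word over X to a geodesic word; in particular G has a Dehn algorithm reducing all words to geodesics. -/

import Mathlib

/-! A word that is not geodesic is, by hypothesis, not a `k`-local geodesic, so it contains a
non-geodesic subword `u` of length at most `k`. Since `u` itself represents `u.prod`, that
element has a geodesic representative `v`, and `u → v` is one of the rules and strictly shortens
the word. Word length cannot decrease forever, so rewriting ends at a geodesic word. -/

/-- The minimal length of a word over `X` representing `g` (the geodesic length `l_G`). -/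
noncomputable def lG {G : Type*} [Group G] (X : Set G) (g : G) : ℕ :=
  sInf {n | ∃ w : List G, (∀ x ∈ w, x ∈ X) ∧ w.prod = g ∧ w.length = n}

/-- `w` is a geodesic word over `X`. -/
def Geodesic {G : Type*} [Group G] (X : Set G) (w : List G) : Prop :=
  (∀ x ∈ w, x ∈ X) ∧ w.length = lG X w.prod

/-- `w` is a `k`-local geodesic over `X`: every subword (contiguous factor) of length
at most `k` is geodesic. -/
def LocalGeodesic {G : Type*} [Group G] (X : Set G) (k : ℕ) (w : List G) : Prop :=
  (∀ x ∈ w, x ∈ X) ∧ ∀ u : List G, u <:+: w → u.length ≤ k → Geodesic X u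

/-- A language `L` of words over `X` is `k`-locally excluding: membership (among words
over `X`) is equivalent to avoiding a fixed finite set of forbidden subwords of length
at most `k`. -/
def LocallyExcluding {G : Type*} [Group G] (X : Set G) (k : ℕ) (L : Set (List G)) : Prop :=
  ∃ F : Set (List G), F.Finite ∧ (∀ f ∈ F, f.length ≤ k) ∧
    ∀ w : List G, (∀ x ∈ w, x ∈ X) → (w ∈ L ↔ ∀ f ∈ F, ¬ f <:+: w)

/-- One step of rewriting with the set of rules `R` (replace a subword `p.1` by `p.2`). -/
def Rewrite {G : Type*} (R : Set (List G × List G)) (w w' : List G) : Prop :=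
  ∃ p ∈ R, ∃ l r : List G, w = l ++ p.1 ++ r ∧ w' = l ++ p.2 ++ r

theorem Relation.exists_reflTransGen_of_exists_step_lt {α : Type*} (r : α → α → Prop)
    (S T : α → Prop) (f : α → ℕ) (hstep : ∀ a, S a → ¬ T a → ∃ b, r a b ∧ S b ∧ f b < f a)
    (a : α) (ha : S a) : ∃ b, Relation.ReflTransGen r a b ∧ T b := by
  induction h : f a using Nat.strong_induction_on generalizing a with
  | _ n ih =>
    by_cases hT : T a
    · exact ⟨a, .refl, hT⟩
    obtain ⟨b, hab, hb, hlt⟩ := hstep a ha hT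
    obtain ⟨c, hbc, hc⟩ := ih (f b) (h ▸ hlt) b hb rfl
    exact ⟨c, .head hab hbc, hc⟩

section Words

variable {G : Type*} [Group G] {X : Set G}

theorem lG_prod_le_length {w : List G} (hw : ∀ x ∈ w, x ∈ X) : lG X w.prod ≤ w.length :=
  Nat.sInf_le ⟨w, hw, rfl, rfl⟩

theorem exists_geodesic_prod_eq {w : List G} (hw : ∀ x ∈ w, x ∈ X) :
    ∃ v, Geodesic X v ∧ v.prod = w.prod := by
  obtain ⟨v, hv, hprod, hlen⟩ := Nat.sInf_mem (⟨w.length, w, hw, rfl, rfl⟩ :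
    {n | ∃ v : List G, (∀ x ∈ v, x ∈ X) ∧ v.prod = w.prod ∧ v.length = n}.Nonempty)
  exact ⟨v, ⟨hv, by rw [hprod, hlen]; rfl⟩, hprod⟩

theorem Geodesic.of_lG_prod_ge_length {w : List G} (hw : ∀ x ∈ w, x ∈ X)
    (h : w.length ≤ lG X w.prod) : Geodesic X w :=
  ⟨hw, le_antisymm h (lG_prod_le_length hw)⟩

def geodesicRules (X : Set G) (k : ℕ) : Set (List G × List G) :=
  {p | (∀ x ∈ p.1, x ∈ X) ∧ (∀ x ∈ p.2, x ∈ X) ∧ p.2.length < p.1.length ∧ p.1.length ≤ k ∧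
    p.1.prod = p.2.prod ∧ Geodesic X p.2}

theorem exists_rewrite_length_lt_of_not_localGeodesic {k : ℕ} {w : List G}
    (hw : ∀ x ∈ w, x ∈ X) (hloc : ¬ LocalGeodesic X k w) :
    ∃ w', Rewrite (geodesicRules X k) w w' ∧ (∀ x ∈ w', x ∈ X) ∧ w'.length < w.length := by
  obtain ⟨u, ⟨l, r, rfl⟩, hu_len, hu⟩ : ∃ u, u <:+: w ∧ u.length ≤ k ∧ ¬ Geodesic X u := by
    simpa using not_and.1 hloc hw
  have hu_X : ∀ x ∈ u, x ∈ X := fun x hx => hw x (by simp [hx])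
  obtain ⟨v, hv, hv_prod⟩ := exists_geodesic_prod_eq hu_X
  have hvu : v.length < u.length := by
    rw [hv.2, hv_prod]
    exact lt_of_not_ge fun h => hu (.of_lG_prod_ge_length hu_X h)
  refine ⟨l ++ v ++ r, ⟨(u, v), ⟨hu_X, hv.1, hvu, hu_len, hv_prod.symm, hv⟩, l, r, rfl, rfl⟩,
    ?_, by simp only [List.length_append]; omega⟩
  simp only [List.mem_append]
  rintro x ((hx | hx) | hx)
  · exact hw x (by simp [hx])
  · exact hv.1 x hx
  · exact hw x (by simp [hx])

end Words

theorem rewrite_to_geodesic_of_localGeodesic_general {G : Type*} [Group G] (X : Set G)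
    (k : ℕ)
    (hloc : ∀ w : List G, LocalGeodesic X k w → Geodesic X w) :
    ∀ w : List G, (∀ x ∈ w, x ∈ X) →
      ∃ w' : List G,
        Relation.ReflTransGen
          (Rewrite {p : List G × List G | (∀ x ∈ p.1, x ∈ X) ∧ (∀ x ∈ p.2, x ∈ X) ∧
            p.2.length < p.1.length ∧ p.1.length ≤ k ∧ p.1.prod = p.2.prod ∧
            Geodesic X p.2}) w w' ∧
        Geodesic X w' :=
  Relation.exists_reflTransGen_of_exists_step_lt (Rewrite (geodesicRules X k))
    (fun w => ∀ x ∈ w, x ∈ X) (Geodesic X) List.length fun _ hw hgeo =>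
      exists_rewrite_length_lt_of_not_localGeodesic hw fun h => hgeo (hloc _ h)

/-- (iii) implies (ii) in the main theorem: if every `k`-local geodesic over `X` is
geodesic, then repeated application of the length-reducing rules
`{u → v : l(v) < l(u) ≤ k, u =_G v, v geodesic}` reduces every word over `X` to a
geodesic word. -/
theorem rewrite_to_geodesic_of_localGeodesic {G : Type*} [Group G] (X : Set G)
    (hfin : X.Finite) (hsym : ∀ x ∈ X, x⁻¹ ∈ X) (hgen : Subgroup.closure X = ⊤)
    (k : ℕ) (hk : 0 < k)
    (hloc : ∀ w : List G, LocalGeodesic X k w → Geodesic X w) :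
    ∀ w : List G, (∀ x ∈ w, x ∈ X) →
      ∃ w' : List G,
        Relation.ReflTransGen
          (Rewrite {p : List G × List G | (∀ x ∈ p.1, x ∈ X) ∧ (∀ x ∈ p.2, x ∈ X) ∧
            p.2.length < p.1.length ∧ p.1.length ≤ k ∧ p.1.prod = p.2.prod ∧
            Geodesic X p.2}) w w' ∧
        Geodesic X w' :=
  rewrite_to_geodesic_of_localGeodesic_general X k hloc
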